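/- arXiv:2011.01332 — 5 statements merged into one kernel-verified Lean document; each statement's English description precedes it below -/
import Mathlib

section
/- Let L ≥ 1 and let X_1, …, X_L be independent random variables such that X_i follows the Pearson type III distribution with parameters (a_i, b, m_i), where a_i > 0 for all i and b < 0 is common to all the X_i. Set sa = Σ_{i=1}^{L} a_i and sm = Σ_{i=1}^{L} m_i. Then for every n ∈ ℕ, the n-th moment of the log sum SY = exp(X_1 + ⋯ + X_L) satisfies E[exp(n(X_1 + ⋯ + X_L))] = e^{n·sm} (b/(b − n))^{sa}, where b/(b − n) > 0 since b < 0. -/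
/-!
The substitution `u = b (x - m)` turns the Pearson type III density into the Gamma kernel
`uᵃ⁻¹ e⁻ᵘ / Γ(a)` on `(0, ∞)`, so `E[e^{tX}] = e^{tm} (1 - t/b)⁻ᵃ = e^{tm} (b / (b - t))ᵃ` whenever
`t / b < 1`. For independent summands the moment generating function of the sum is the product
of these factors.
-/

open MeasureTheory ProbabilityTheory Set

/-- The Pearson type III density with shape `a`, inverse scale `b ≠ 0` and shift `m`,
supported on `(m, ∞)` when `b > 0` and on `(-∞, m)` when `b < 0`. -/
noncomputable def pearsonPDF (a b m : ℝ) (x : ℝ) : ℝ :=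
  if (0 < b ∧ m < x) ∨ (b < 0 ∧ x < m) then
    |b| / Real.Gamma a * (b * (x - m)) ^ (a - 1) * Real.exp (-(b * (x - m)))
  else 0

lemma pearsonPDF_eq_indicator (a b m x : ℝ) :
    pearsonPDF a b m x = (Ioi 0).indicator
      (fun u => |b| / Real.Gamma a * u ^ (a - 1) * Real.exp (-u)) (b * (x - m)) := by
  simp only [pearsonPDF, indicator_apply, mem_Ioi, mul_pos_iff, sub_pos, sub_neg]

lemma measurable_pearsonPDF (a b m : ℝ) : Measurable (pearsonPDF a b m) := by
  simp_rw [funext (pearsonPDF_eq_indicator a b m)]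
  exact (Measurable.indicator (by fun_prop) measurableSet_Ioi).comp (by fun_prop)

lemma pearsonPDF_nonneg {a : ℝ} (ha : 0 < a) (b m x : ℝ) : 0 ≤ pearsonPDF a b m x := by
  have := Real.Gamma_pos_of_pos ha
  rw [pearsonPDF_eq_indicator]
  refine indicator_nonneg (fun u (hu : 0 < u) => ?_) _
  positivity

lemma integral_exp_mul_pearsonPDF {a b : ℝ} (ha : 0 < a) (hb : b ≠ 0) {t : ℝ} (ht : t / b < 1)
    (m : ℝ) :
    ∫ x, Real.exp (t * x) * pearsonPDF a b m x = Real.exp (t * m) * (b / (b - t)) ^ a := by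
  set g : ℝ → ℝ := fun u => |b| / Real.Gamma a * u ^ (a - 1) * Real.exp (-u)
  set φ : ℝ → ℝ := (Ioi 0).indicator fun u => Real.exp (t * (m + u / b)) * g u
  have hsubst : ∀ x, Real.exp (t * x) * pearsonPDF a b m x = φ (b * (x - m)) := by
    intro x
    rw [pearsonPDF_eq_indicator, show φ (b * (x - m)) = Real.exp (t * (m + b * (x - m) / b)) *
      (Ioi 0).indicator g (b * (x - m)) from indicator_mul_right _ _ _]
    congr 3
    field_simp
    ring
  have hkernel : ∀ u, Real.exp (t * (m + u / b)) * g u =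
      Real.exp (t * m) * (|b| / Real.Gamma a) * (u ^ (a - 1) * Real.exp (-((1 - t / b) * u))) := by
    intro u
    have hexp : -((1 - t / b) * u) = t * (u / b) + -u := by ring
    simp only [g, hexp, mul_add, Real.exp_add]
    ring
  have hr : 1 / (1 - t / b) = b / (b - t) := by
    rw [one_sub_div hb, one_div_div]
  calc ∫ x, Real.exp (t * x) * pearsonPDF a b m x
      = ∫ x, φ (b * (x - m)) := by simp_rw [hsubst]
    _ = |b⁻¹| * ∫ u in Ioi 0, Real.exp (t * (m + u / b)) * g u := by
      rw [integral_sub_right_eq_self (fun x => φ (b * x)), Measure.integral_comp_mul_left,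
        integral_indicator measurableSet_Ioi, smul_eq_mul]
    _ = |b⁻¹| * (Real.exp (t * m) * (|b| / Real.Gamma a)) *
          ((1 / (1 - t / b)) ^ a * Real.Gamma a) := by
      simp_rw [hkernel]
      rw [integral_const_mul, Real.integral_rpow_mul_exp_neg_mul_Ioi ha (sub_pos.2 ht)]
      ring
    _ = Real.exp (t * m) * (b / (b - t)) ^ a := by
      have := (Real.Gamma_pos_of_pos ha).ne'
      rw [hr, abs_inv]
      field_simp

lemma mgf_of_map_eq_pearson {Ω : Type*} [MeasurableSpace Ω] {μ : Measure Ω} {X : Ω → ℝ}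
    (hX : AEMeasurable X μ) {a b m : ℝ} (ha : 0 < a) (hb : b ≠ 0)
    (hlaw : μ.map X = volume.withDensity fun x => ENNReal.ofReal (pearsonPDF a b m x))
    {t : ℝ} (ht : t / b < 1) :
    mgf X μ t = Real.exp (t * m) * (b / (b - t)) ^ a := by
  rw [mgf, ← integral_map (f := fun x => Real.exp (t * x)) hX (by fun_prop), hlaw,
    integral_withDensity_eq_integral_toReal_smul (measurable_pearsonPDF a b m).ennreal_ofReal
      (ae_of_all _ fun _ => ENNReal.ofReal_lt_top)]
  simp_rw [ENNReal.toReal_ofReal (pearsonPDF_nonneg ha b m _), smul_eq_mul, mul_comm _ (Real.exp _)]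
  exact integral_exp_mul_pearsonPDF ha hb ht m

theorem logsum_pearsonIII_moments_neg_general {Ω : Type*} [MeasureSpace Ω]
    (L : ℕ)
    (a m : Fin L → ℝ) (b : ℝ) (ha : ∀ i, 0 < a i) (hb : b < 0)
    (X : Fin L → Ω → ℝ) (hmeas : ∀ i, Measurable (X i))
    (hindep : iIndepFun X ℙ)
    (hlaw : ∀ i, Measure.map (X i) ℙ =
      volume.withDensity fun x => ENNReal.ofReal (pearsonPDF (a i) b (m i) x))
    (n : ℕ) :
    ∫ ω, Real.exp (n * ∑ i, X i ω) ∂ℙ =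
      Real.exp (n * ∑ i, m i) * (b / (b - n)) ^ (∑ i, a i) := by
  have hn : (n : ℝ) / b < 1 := (div_nonpos_of_nonneg_of_nonpos n.cast_nonneg hb.le).trans_lt one_pos
  have hratio : 0 < b / (b - n) := div_pos_of_neg_of_neg hb (by linarith [n.cast_nonneg (α := ℝ)])
  calc ∫ ω, Real.exp (n * ∑ i, X i ω) ∂ℙ
      = mgf (∑ i, X i) ℙ n := by simp only [mgf, Finset.sum_apply]
    _ = ∏ i, mgf (X i) ℙ n := hindep.mgf_sum hmeas _
    _ = ∏ i, Real.exp (n * m i) * (b / (b - n)) ^ a i := Finset.prod_congr rfl fun i _ =>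
      mgf_of_map_eq_pearson (hmeas i).aemeasurable (ha i) hb.ne (hlaw i) hn
    _ = Real.exp (n * ∑ i, m i) * (b / (b - n)) ^ (∑ i, a i) := by
      rw [Finset.prod_mul_distrib, ← Real.exp_sum, Finset.mul_sum, Real.rpow_sum_of_pos hratio]

/-- **Moments of the log sum of Pearson type III RVs with common `b < 0`.**
With `sa = Σ a_i`, `sm = Σ m_i`, for every `n ∈ ℕ`,
`E[exp(n (X₁ + ⋯ + X_L))] = e^{n·sm} (b/(b-n))^{sa}`. -/
theorem logsum_pearsonIII_moments_neg {Ω : Type*} [MeasureSpace Ω]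
    [IsProbabilityMeasure (ℙ : Measure Ω)] (L : ℕ) (hL : 1 ≤ L)
    (a m : Fin L → ℝ) (b : ℝ) (ha : ∀ i, 0 < a i) (hb : b < 0)
    (X : Fin L → Ω → ℝ) (hmeas : ∀ i, Measurable (X i))
    (hindep : iIndepFun X ℙ)
    (hlaw : ∀ i, Measure.map (X i) ℙ =
      volume.withDensity fun x => ENNReal.ofReal (pearsonPDF (a i) b (m i) x))
    (n : ℕ) :
    ∫ ω, Real.exp (n * ∑ i, X i ω) ∂ℙ =
      Real.exp (n * ∑ i, m i) * (b / (b - n)) ^ (∑ i, a i) :=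
  logsum_pearsonIII_moments_neg_general L a m b ha hb X hmeas hindep hlaw n
end

section
/- Let a > 0, b > 0 and m ∈ ℝ, let X be a random variable following the Pearson type III distribution with parameters (a, b, m), and let Z = 1/(1 + e^{−X}). Then the law of Z is absolutely continuous with density f_Z(z; a, b, m) = (b e^{bm}/Γ(a)) (b(ln(z/(1 − z)) − m))^{a−1} z^{−b−1} (1 − z)^{b−1} for z ∈ (1/(1 + e^{−m}), 1), and density 0 elsewhere. -/
/-!
The logistic function `σ` is a bijection `ℝ → (0, 1)` whose inverse `logit z = log (z / (1 - z))`
has derivative `1 / z + 1 / (1 - z)`. By the one-dimensional change of variables formula the law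
of `Z = σ(X)` therefore has density `|logit' z| · f_X(logit z)` on `(0, 1)`. Since `σ` is strictly
increasing, `m < logit z` iff `σ(m) < z`, and `exp (-b · logit z) = z^(-b) (1 - z)^b` turns
this density into the stated one.
-/

open MeasureTheory ProbabilityTheory Set

open Real

theorem map_withDensity_eq_withDensity_indicator_abs_deriv_mul {f : ℝ → ENNReal}
    {g h h' : ℝ → ℝ} {S : Set ℝ} (hS : MeasurableSet S) (hg : Measurable g)
    (hgS : ∀ x, g x ∈ S) (hhg : Function.LeftInverse h g) (hgh : LeftInvOn g h S)
    (hh' : ∀ z ∈ S, HasDerivWithinAt h (h' z) S z) :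
    (volume.withDensity f).map g =
      volume.withDensity (S.indicator fun z => ENNReal.ofReal |h' z| * f (h z)) := by
  ext s hs
  have hpre : g ⁻¹' s = h '' (s ∩ S) := by
    ext x
    refine ⟨fun hx => ⟨g x, ⟨hx, hgS x⟩, hhg x⟩, ?_⟩
    rintro ⟨z, ⟨hzs, hzS⟩, rfl⟩
    simpa [hgh hzS] using hzs
  rw [Measure.map_apply hg hs, withDensity_apply _ (hg hs), withDensity_apply _ hs,
    setLIntegral_indicator hS, inter_comm S, hpre,
    lintegral_image_eq_lintegral_abs_deriv_mul (hs.inter hS)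
      (fun z hz => (hh' z hz.2).mono inter_subset_right)
      (hgh.injOn.mono inter_subset_right)]

noncomputable def logit (z : ℝ) : ℝ := log (z / (1 - z))

lemma logit_sigmoid (x : ℝ) : logit (sigmoid x) = x := by
  rw [logit, ← sigmoid_neg, ← sigmoid_mul_rexp_neg, div_mul_cancel_left₀ (sigmoid_pos x).ne',
    ← exp_neg, neg_neg, log_exp]

lemma sigmoid_logit {z : ℝ} (hz : z ∈ Ioo 0 1) : sigmoid (logit z) = z := by
  obtain ⟨x, rfl⟩ : z ∈ range sigmoid := range_sigmoid ▸ hz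
  rw [logit_sigmoid]

lemma hasDerivAt_logit {z : ℝ} (hz : z ∈ Ioo 0 1) :
    HasDerivAt logit (z⁻¹ + (1 - z)⁻¹) z := by
  have hz0 : z ≠ 0 := hz.1.ne'
  have hz1 : 1 - z ≠ 0 := (sub_pos.2 hz.2).ne'
  have hdiv := ((hasDerivAt_id' z).fun_div ((hasDerivAt_id' z).const_sub 1) hz1).log
    (div_pos hz.1 (sub_pos.2 hz.2)).ne'
  refine hdiv.congr_deriv ?_
  field_simp
  ring

lemma rexp_neg_mul_logit {z : ℝ} (hz : z ∈ Ioo 0 1) (b : ℝ) :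
    exp (-(b * logit z)) = z ^ (-b) * (1 - z) ^ b := by
  rw [logit, ← neg_mul, mul_comm, ← rpow_def_of_pos (div_pos hz.1 (sub_pos.2 hz.2)),
    div_rpow hz.1.le (sub_pos.2 hz.2).le, rpow_neg hz.1.le, rpow_neg (sub_pos.2 hz.2).le]
  field_simp

noncomputable def logitPearsonPDF (a b m z : ℝ) : ℝ :=
  if 1 / (1 + exp (-m)) < z ∧ z < 1 then
    b * exp (b * m) / Gamma a * (b * (logit z - m)) ^ (a - 1) *
      z ^ (-b - 1) * (1 - z) ^ (b - 1)
  else 0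

lemma logitPearsonPDF_of_notMem_Ioo {a b m z : ℝ} (hz : z ∉ Ioo 0 1) :
    logitPearsonPDF a b m z = 0 :=
  if_neg fun h => hz ⟨(one_div_pos.2 (by positivity)).trans h.1, h.2⟩

lemma abs_deriv_mul_pearsonPDF_logit {a b m z : ℝ} (hb : 0 < b) (hz : z ∈ Ioo 0 1) :
    |z⁻¹ + (1 - z)⁻¹| * pearsonPDF a b m (logit z) = logitPearsonPDF a b m z := by
  have hz0 : z ≠ 0 := hz.1.ne'
  have hz1 : 0 < 1 - z := sub_pos.2 hz.2
  have hcond : m < logit z ↔ 1 / (1 + exp (-m)) < z := by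
    rw [one_div, ← sigmoid_def, ← sigmoid_lt_iff, sigmoid_logit hz]
  unfold pearsonPDF logitPearsonPDF
  by_cases hm : m < logit z
  · rw [if_pos (Or.inl ⟨hb, hm⟩), if_pos ⟨hcond.1 hm, hz.2⟩, abs_of_pos hb,
      abs_of_pos (by have := hz.1; positivity),
      show -(b * (logit z - m)) = b * m + -(b * logit z) by ring,
      exp_add, rexp_neg_mul_logit hz, rpow_sub_one hz0, rpow_sub_one hz1.ne']
    field_simp
    ring
  · rw [if_neg (by rintro (⟨-, h⟩ | ⟨h, -⟩) <;> linarith), if_neg fun h => hm (hcond.2 h.1),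
      mul_zero]

lemma indicator_Ioo_abs_deriv_mul_pearsonPDF_logit {a b m : ℝ} (hb : 0 < b) :
    (Ioo 0 1).indicator (fun z => ENNReal.ofReal |z⁻¹ + (1 - z)⁻¹| *
        ENNReal.ofReal (pearsonPDF a b m (logit z))) =
      fun z => ENNReal.ofReal (logitPearsonPDF a b m z) := by
  funext z
  by_cases hz : z ∈ Ioo 0 1
  · rw [indicator_of_mem hz, ← ENNReal.ofReal_mul (abs_nonneg _),
      abs_deriv_mul_pearsonPDF_logit hb hz]
  · rw [indicator_of_notMem hz, logitPearsonPDF_of_notMem_Ioo hz, ENNReal.ofReal_zero]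

theorem logitPearsonIII_pdf_pos_general {Ω : Type*} [MeasureSpace Ω]
    (a b m : ℝ) (hb : 0 < b)
    (X : Ω → ℝ) (hX : Measurable X)
    (hlaw : Measure.map X ℙ = volume.withDensity fun x => ENNReal.ofReal (pearsonPDF a b m x)) :
    Measure.map (fun ω => 1 / (1 + Real.exp (-X ω))) ℙ =
      volume.withDensity fun z =>
        ENNReal.ofReal
          (if 1 / (1 + Real.exp (-m)) < z ∧ z < 1 then
            b * Real.exp (b * m) / Real.Gamma a *
              (b * (Real.log (z / (1 - z)) - m)) ^ (a - 1) *
              z ^ (-b - 1) * (1 - z) ^ (b - 1)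
          else 0) := by
  have hZ : (fun ω => 1 / (1 + exp (-X ω))) = sigmoid ∘ X := by
    funext ω
    rw [Function.comp_apply, sigmoid_def, one_div]
  rw [hZ, ← Measure.map_map continuous_sigmoid.measurable hX, hlaw,
    map_withDensity_eq_withDensity_indicator_abs_deriv_mul measurableSet_Ioo
      continuous_sigmoid.measurable (fun x => range_sigmoid ▸ mem_range_self x)
      logit_sigmoid (fun _ => sigmoid_logit)
      (fun _ hz => (hasDerivAt_logit hz).hasDerivWithinAt),
    indicator_Ioo_abs_deriv_mul_pearsonPDF_logit hb]
  rfl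

/-- **PDF of the logit Pearson type III distribution for `b > 0`.**
If `X ~ PearsonIII(a, b, m)` with `a, b > 0` and `Z = 1/(1 + e^{-X})`, then the law of
`Z` has density
`(b e^{bm}/Γ(a)) (b(ln(z/(1-z)) - m))^{a-1} z^{-b-1} (1-z)^{b-1}` on
`(1/(1 + e^{-m}), 1)`, and `0` elsewhere. -/
theorem logitPearsonIII_pdf_pos {Ω : Type*} [MeasureSpace Ω]
    [IsProbabilityMeasure (ℙ : Measure Ω)] (a b m : ℝ) (ha : 0 < a) (hb : 0 < b)
    (X : Ω → ℝ) (hX : Measurable X)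
    (hlaw : Measure.map X ℙ = volume.withDensity fun x => ENNReal.ofReal (pearsonPDF a b m x)) :
    Measure.map (fun ω => 1 / (1 + Real.exp (-X ω))) ℙ =
      volume.withDensity fun z =>
        ENNReal.ofReal
          (if 1 / (1 + Real.exp (-m)) < z ∧ z < 1 then
            b * Real.exp (b * m) / Real.Gamma a *
              (b * (Real.log (z / (1 - z)) - m)) ^ (a - 1) *
              z ^ (-b - 1) * (1 - z) ^ (b - 1)
          else 0) :=
  logitPearsonIII_pdf_pos_general a b m hb X hX hlaw
end

section
/- Let L ≥ 1 and let X_1, …, X_L be independent random variables such that X_i follows the Pearson type III distribution with parameters (a_i, b, m_i), where a_i > 0 for all i and b > 0 is common to all the X_i. Set sa = Σ_{i=1}^{L} a_i and sm = Σ_{i=1}^{L} m_i, and let SZ = 1/(1 + e^{−(X_1 + ⋯ + X_L)}). Then for every z with 1/(1 + e^{−sm}) < z < 1, P(SZ ≤ z) = (1/Γ(sa)) γ(sa, b(ln(z/(1 − z)) − sm)), where γ(a, u) = ∫_0^u t^{a−1} e^{−t} dt is the lower incomplete gamma function. -/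
open MeasureTheory ProbabilityTheory Set

/-!
For `b > 0` the shifted variable `X i - m i` is gamma distributed with shape `a i` and rate `b`.
Gamma laws with a common rate are closed under convolution (the convolution integral of two
gamma densities is a Beta integral), so `∑ X i - ∑ m i` is gamma distributed with shape `∑ a i`.
The logistic function is increasing with inverse `z ↦ log (z / (1 - z))`, so the event `SZ ≤ z`
is `∑ X i ≤ log (z / (1 - z))`, whose probability is the gamma CDF; the substitution `t = b x`
turns it into the regularised lower incomplete gamma function.
-/

open Real
open scoped ENNReal

lemma map_sub_right_withDensity {G : Type*} [MeasurableSpace G] [AddGroup G] [MeasurableAdd G]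
    {μ : Measure G} [μ.IsAddRightInvariant] (f : G → ℝ≥0∞) (m : G) :
    (μ.withDensity f).map (· - m) = μ.withDensity fun x => f (x + m) := by
  have hsub := measurableEmbedding_subRight m
  ext s hs
  rw [Measure.map_apply hsub.measurable hs, withDensity_apply _ hs,
    withDensity_apply _ (hsub.measurable hs),
    ← (measurePreserving_sub_right μ m).setLIntegral_comp_preimage_emb hsub (fun x => f (x + m)) s]
  simp only [sub_add_cancel]

lemma lintegral_comp_inv_mul_left {c : ℝ} (hc : 0 < c) (g : ℝ → ℝ≥0∞) :
    ∫⁻ y, g (c⁻¹ * y) = ENNReal.ofReal c * ∫⁻ t, g t := by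
  have hmap := Real.map_volume_mul_left (inv_ne_zero hc.ne')
  rw [inv_inv, abs_of_pos hc] at hmap
  rw [← smul_eq_mul, ← lintegral_smul_measure, ← hmap,
    (measurableEmbedding_mulLeft₀ (inv_ne_zero hc.ne')).lintegral_map]

lemma sigmoid_log_div_one_sub {z : ℝ} (h0 : 0 < z) (h1 : z < 1) :
    sigmoid (log (z / (1 - z))) = z := by
  rw [sigmoid_def, exp_neg, exp_log (div_pos h0 (by linarith))]
  field_simp
  ring

namespace ProbabilityTheory

lemma measurable_gammaPDF (a r : ℝ) : Measurable (gammaPDF a r) :=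
  (measurable_gammaPDFReal a r).ennreal_ofReal

lemma gammaPDF_mul_gammaPDF_sub_ae_eq {a₁ a₂ r x : ℝ} (ha₁ : 0 < a₁) (ha₂ : 0 < a₂)
    (hr : 0 < r) (hx : 0 < x) :
    (fun y => gammaPDF a₁ r y * gammaPDF a₂ r (x - y)) =ᵐ[volume] fun y =>
      ENNReal.ofReal (r ^ (a₁ + a₂) / Gamma (a₁ + a₂) * x ^ (a₁ + a₂ - 2) * exp (-(r * x))) *
        betaPDF a₁ a₂ (x⁻¹ * y) := by
  filter_upwards [Measure.ae_ne volume 0, Measure.ae_ne volume x] with y hy0 hyx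
  rcases lt_or_gt_of_ne hy0 with hy | hy
  · rw [gammaPDF_of_neg hy, betaPDF_eq_zero_of_nonpos
      (mul_nonpos_of_nonneg_of_nonpos (inv_nonneg.2 hx.le) hy.le)]
    simp
  rcases lt_or_gt_of_ne hyx with hyx | hyx
  · have ht0 : 0 < x⁻¹ * y := by positivity
    have ht1 : x⁻¹ * y < 1 := by rwa [inv_mul_lt_one₀ hx]
    rw [gammaPDF_of_nonneg hy.le, gammaPDF_of_nonneg (by linarith), betaPDF_of_pos_lt_one ht0 ht1,
      ← ENNReal.ofReal_mul (by positivity), ← ENNReal.ofReal_mul (by positivity)]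
    congr 1
    have hΓ₁ := Gamma_pos_of_pos ha₁
    have hΓ₂ := Gamma_pos_of_pos ha₂
    have hΓ := Gamma_pos_of_pos (add_pos ha₁ ha₂)
    have hxy : 0 < x - y := by linarith
    rw [beta, show 1 - x⁻¹ * y = x⁻¹ * (x - y) by field_simp, mul_rpow (by positivity) hy.le,
      mul_rpow (by positivity) hxy.le, inv_rpow hx.le, inv_rpow hx.le, rpow_add hr,
      show a₁ + a₂ - 2 = (a₁ - 1) + (a₂ - 1) by ring, rpow_add hx,
      show -(r * x) = -(r * y) + -(r * (x - y)) by ring, exp_add]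
    field_simp
  · rw [gammaPDF_of_neg (by linarith : x - y < 0), betaPDF_eq_zero_of_one_le
      (by rw [le_inv_mul_iff₀ hx]; linarith)]
    simp

-- At `x = 0` the right side can be `r` (when `a₁ + a₂ = 1`, as `0 ^ 0 = 1`) while the left is `0`.
lemma gammaPDF_lconvolution_gammaPDF {a₁ a₂ r x : ℝ} (ha₁ : 0 < a₁) (ha₂ : 0 < a₂)
    (hr : 0 < r) (hx : x ≠ 0) :
    (gammaPDF a₁ r ⋆ₗ gammaPDF a₂ r) x = gammaPDF (a₁ + a₂) r x := by
  simp only [lconvolution_def, neg_add_eq_sub]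
  rcases lt_or_gt_of_ne hx with hx | hx
  · rw [gammaPDF_of_neg hx]
    refine (lintegral_congr fun y => ?_).trans lintegral_zero
    rcases lt_or_ge y 0 with hy | hy
    · simp [gammaPDF_of_neg hy]
    · simp [gammaPDF_of_neg (by linarith : x - y < 0)]
  · rw [lintegral_congr_ae (gammaPDF_mul_gammaPDF_sub_ae_eq ha₁ ha₂ hr hx),
      lintegral_const_mul' _ _ ENNReal.ofReal_ne_top, lintegral_comp_inv_mul_left hx,
      lintegral_betaPDF_eq_one ha₁ ha₂, mul_one, ← ENNReal.ofReal_mul (by positivity),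
      gammaPDF_of_nonneg hx.le, show a₁ + a₂ - 1 = (a₁ + a₂ - 2) + 1 by ring, rpow_add_one hx.ne']
    ring_nf

lemma gammaMeasure_conv_gammaMeasure {a₁ a₂ r : ℝ} (ha₁ : 0 < a₁) (ha₂ : 0 < a₂) (hr : 0 < r) :
    gammaMeasure a₁ r ∗ gammaMeasure a₂ r = gammaMeasure (a₁ + a₂) r := by
  rw [gammaMeasure, gammaMeasure,
    conv_withDensity_eq_lconvolution (measurable_gammaPDF _ _) (measurable_gammaPDF _ _)]
  refine withDensity_congr_ae ?_
  filter_upwards [Measure.ae_ne volume 0] with x hx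
  exact gammaPDF_lconvolution_gammaPDF ha₁ ha₂ hr hx

lemma iIndepFun.map_sum_eq_gammaMeasure {Ω ι : Type*} [MeasurableSpace Ω] {μ : Measure Ω}
    [IsProbabilityMeasure μ] {X : ι → Ω → ℝ} {a : ι → ℝ} {r : ℝ} (hX : ∀ i, Measurable (X i))
    (hindep : iIndepFun X μ) (ha : ∀ i, 0 < a i) (hr : 0 < r)
    (hlaw : ∀ i, μ.map (X i) = gammaMeasure (a i) r) {s : Finset ι} (hs : s.Nonempty) :
    μ.map (∑ i ∈ s, X i) = gammaMeasure (∑ i ∈ s, a i) r := by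
  induction hs using Finset.Nonempty.cons_induction with
  | singleton i => simpa using hlaw i
  | cons i s hi hs ih =>
    rw [Finset.sum_cons, Finset.sum_cons,
      IndepFun.map_add_eq_map_conv_map (hX i) (by fun_prop)
        (hindep.indepFun_finsetSum_of_notMem hX hi).symm,
      hlaw i, ih, gammaMeasure_conv_gammaMeasure (ha i) (Finset.sum_pos (fun j _ => ha j) hs) hr]

lemma gammaMeasure_Iic {a r w : ℝ} (ha : 0 < a) (hr : 0 < r) (hw : 0 ≤ w) :
    gammaMeasure a r (Iic w) =
      ENNReal.ofReal (1 / Gamma a * ∫ t in (0 : ℝ)..r * w, t ^ (a - 1) * exp (-t)) := by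
  have := isProbabilityMeasure_gammaMeasure ha hr
  have hpdf : ∀ x ∈ uIcc 0 w, gammaPDFReal a r x =
      r / Gamma a * ((r * x) ^ (a - 1) * exp (-(r * x))) := by
    intro x hx
    rw [uIcc_of_le hw] at hx
    rw [gammaPDFReal, if_pos hx.1, mul_rpow hr.le hx.1, rpow_sub_one hr.ne']
    field_simp
  rw [← ofReal_cdf, cdf_gammaMeasure_eq_integral ha hr]
  congr 1
  calc ∫ x in Iic w, gammaPDFReal a r x
      = ∫ x in (0 : ℝ)..w, gammaPDFReal a r x := by
        have hneg : ∀ x ∈ Iic w \ Icc 0 w, gammaPDFReal a r x = 0 := fun x hx =>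
          if_neg fun h => hx.2 ⟨h, hx.1⟩
        rw [setIntegral_eq_of_subset_of_forall_sdiff_eq_zero measurableSet_Iic Icc_subset_Iic_self
          hneg, integral_Icc_eq_integral_Ioc, intervalIntegral.integral_of_le hw]
    _ = r / Gamma a * ∫ x in (0 : ℝ)..w, (r * x) ^ (a - 1) * exp (-(r * x)) := by
        rw [intervalIntegral.integral_congr hpdf, intervalIntegral.integral_const_mul]
    _ = 1 / Gamma a * ∫ t in (0 : ℝ)..r * w, t ^ (a - 1) * exp (-t) := by
        rw [intervalIntegral.integral_comp_mul_left (fun t => t ^ (a - 1) * exp (-t)) hr.ne',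
          mul_zero, smul_eq_mul]
        field_simp

lemma pearsonPDF_ae_eq_gammaPDF {a b m : ℝ} (hb : 0 < b) :
    (fun x => ENNReal.ofReal (pearsonPDF a b m x)) =ᵐ[volume] fun x => gammaPDF a b (x - m) := by
  filter_upwards [Measure.ae_ne volume m] with x hx
  rcases lt_or_gt_of_ne hx with hx | hx
  · rw [pearsonPDF, if_neg (by rintro (⟨-, h⟩ | ⟨h, -⟩) <;> linarith),
      gammaPDF_of_neg (by linarith), ENNReal.ofReal_zero]
  · rw [pearsonPDF, if_pos (Or.inl ⟨hb, hx⟩), gammaPDF_of_nonneg (by linarith), abs_of_pos hb,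
      mul_rpow hb.le (by linarith), rpow_sub_one hb.ne']
    congr 1
    field_simp

lemma map_sub_eq_gammaMeasure_of_map_eq_withDensity_pearsonPDF {Ω : Type*} [MeasurableSpace Ω]
    {μ : Measure Ω} {X : Ω → ℝ} {a b m : ℝ} (hb : 0 < b) (hX : Measurable X)
    (hlaw : μ.map X = volume.withDensity fun x => ENNReal.ofReal (pearsonPDF a b m x)) :
    μ.map (fun ω => X ω - m) = gammaMeasure a b := by
  rw [show (fun ω => X ω - m) = (· - m) ∘ X from rfl,
    ← Measure.map_map (measurable_sub_const m) hX, hlaw,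
    withDensity_congr_ae (pearsonPDF_ae_eq_gammaPDF hb), map_sub_right_withDensity, gammaMeasure]
  simp only [add_sub_cancel_right]

end ProbabilityTheory

/-- **CDF of the logit sum of independent Pearson type III RVs with common `b > 0`.**
With `sa = Σ a_i`, `sm = Σ m_i` and `SZ = 1/(1 + e^{-(X₁ + ⋯ + X_L)})`, for every
`1/(1 + e^{-sm}) < z < 1`,
`P(SZ ≤ z) = (1/Γ(sa)) γ(sa, b(ln(z/(1-z)) - sm))`. -/
theorem logitsum_pearsonIII_cdf_pos {Ω : Type*} [MeasureSpace Ω]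
    [IsProbabilityMeasure (ℙ : Measure Ω)] (L : ℕ) (hL : 1 ≤ L)
    (a m : Fin L → ℝ) (b : ℝ) (ha : ∀ i, 0 < a i) (hb : 0 < b)
    (X : Fin L → Ω → ℝ) (hmeas : ∀ i, Measurable (X i))
    (hindep : iIndepFun X ℙ)
    (hlaw : ∀ i, Measure.map (X i) ℙ =
      volume.withDensity fun x => ENNReal.ofReal (pearsonPDF (a i) b (m i) x))
    (z : ℝ) (hz0 : 1 / (1 + Real.exp (-∑ i, m i)) < z) (hz1 : z < 1) :
    ℙ {ω | 1 / (1 + Real.exp (-∑ i, X i ω)) ≤ z} =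
      ENNReal.ofReal ((1 / Real.Gamma (∑ i, a i)) *
        ∫ t in (0 : ℝ)..(b * (Real.log (z / (1 - z)) - ∑ i, m i)),
          t ^ ((∑ i, a i) - 1) * Real.exp (-t)) := by
  set c := log (z / (1 - z))
  have hz : 0 < z := (one_div_pos.2 (by positivity)).trans hz0
  have hzc : z = sigmoid c := (sigmoid_log_div_one_sub hz hz1).symm
  have hmc : ∑ i, m i ≤ c := by
    rw [← sigmoid_le_iff, ← hzc, sigmoid_def, ← one_div]
    exact hz0.le
  set Y : Fin L → Ω → ℝ := fun i ω => X i ω - m i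
  have hY : ∀ i, Measurable (Y i) := fun i => (hmeas i).sub_const (m i)
  have hYlaw : ∀ i, Measure.map (Y i) ℙ = gammaMeasure (a i) b := fun i =>
    map_sub_eq_gammaMeasure_of_map_eq_withDensity_pearsonPDF hb (hmeas i) (hlaw i)
  have hevent : {ω | 1 / (1 + exp (-∑ i, X i ω)) ≤ z} = (∑ i, Y i) ⁻¹' Iic (c - ∑ i, m i) := by
    ext ω
    simp [Y, Finset.sum_sub_distrib, hzc, ← sigmoid_def, sigmoid_le_iff]
  have : Nonempty (Fin L) := ⟨⟨0, hL⟩⟩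
  rw [hevent, ← Measure.map_apply (by fun_prop) measurableSet_Iic,
    (hindep.comp (fun i x => x - m i) fun i => measurable_sub_const (m i)).map_sum_eq_gammaMeasure
      hY ha hb hYlaw Finset.univ_nonempty,
    gammaMeasure_Iic (Finset.sum_pos (fun i _ => ha i) Finset.univ_nonempty) hb (sub_nonneg.2 hmc)]
end

section
/- Let a > 0, b > 0 and let A, B, P_s, l, p be positive constants. Let G be a random variable with the Gamma(a, b) distribution, and define the harvested power Q = P_s(1 + e^{AB}) / (e^{AB}(1 + e^{−A(l p G − B)})) − P_s e^{−AB}. Then for every q with 0 < q < P_s, P(Q ≤ q) = (1/Γ(a)) γ(a, −(b/(A l p)) (ln(P_s(1 + e^{AB})/(e^{AB}(q + P_s e^{−AB})) − 1) − A B)), where γ(a, u) = ∫_0^u t^{a−1} e^{−t} dt is the lower incomplete gamma function (the argument of γ is positive for 0 < q < P_s). -/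
/-! The harvested power is a logistic, hence strictly increasing, function of the channel gain
that vanishes at gain `0`; so for `0 < q < P_s` the event `Q ≤ q` is `G ≤ g_q` for an explicit
threshold `g_q ≥ 0`, and the Gamma CDF at `g_q` is `γ(a, b g_q) / Γ(a)` by the substitution
`t = b x`. -/

open MeasureTheory ProbabilityTheory Set

/-- The Gamma density with shape `a > 0` and rate `b > 0`:
`(b^a/Γ(a)) x^{a-1} e^{-bx}` on `(0, ∞)`, and `0` elsewhere. -/
noncomputable def gammaPDF (a b x : ℝ) : ℝ :=
  if 0 < x then b ^ a / Real.Gamma a * x ^ (a - 1) * Real.exp (-(b * x)) else 0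

section

open Real

noncomputable def lowerIncompleteGamma (a u : ℝ) : ℝ :=
  ∫ t in (0 : ℝ)..u, t ^ (a - 1) * exp (-t)

theorem lowerIncompleteGamma_mul {b : ℝ} (hb : 0 < b) (a : ℝ) {c : ℝ} (hc : 0 ≤ c) :
    lowerIncompleteGamma a (b * c) = ∫ x in (0 : ℝ)..c, b ^ a * x ^ (a - 1) * exp (-(b * x)) := by
  have hpow : ∀ x ∈ uIcc 0 c, b ^ a * x ^ (a - 1) * exp (-(b * x))
      = b * ((b * x) ^ (a - 1) * exp (-(b * x))) := by
    intro x hx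
    rw [uIcc_of_le hc] at hx
    rw [mul_rpow hb.le hx.1, rpow_sub_one hb.ne']
    field_simp
  rw [intervalIntegral.integral_congr hpow, intervalIntegral.integral_const_mul,
    intervalIntegral.integral_comp_mul_left (fun t => t ^ (a - 1) * exp (-t)) hb.ne',
    mul_zero, smul_eq_mul, mul_inv_cancel_left₀ hb.ne', lowerIncompleteGamma]

theorem setLIntegral_Iic_gammaPDF {a b : ℝ} (ha : 0 < a) (hb : 0 < b) {c : ℝ} (hc : 0 ≤ c) :
    ∫⁻ x in Iic c, ENNReal.ofReal (_root_.gammaPDF a b x)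
      = ENNReal.ofReal (1 / Gamma a * lowerIncompleteGamma a (b * c)) := by
  set f : ℝ → ℝ := fun x => 1 / Gamma a * (b ^ a * x ^ (a - 1) * exp (-(b * x)))
  have hf_int : IntervalIntegrable f volume 0 c :=
    (((intervalIntegral.intervalIntegrable_rpow' (by linarith : (-1 : ℝ) < a - 1)).const_mul
      (b ^ a)).mul_continuousOn (by fun_prop)).const_mul _
  have hf_nonneg : ∀ x ∈ Ioc 0 c, 0 ≤ f x := fun x hx => by
    have := Gamma_pos_of_pos ha
    have := hx.1
    positivity
  have hnonpos : ∫⁻ x in Iic 0, ENNReal.ofReal (_root_.gammaPDF a b x) = 0 :=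
    (setLIntegral_congr_fun (g := fun _ => 0) measurableSet_Iic fun x (hx : x ≤ 0) => by
      simp [_root_.gammaPDF, not_lt.mpr hx]).trans lintegral_zero
  have hpos : ∫⁻ x in Ioc 0 c, ENNReal.ofReal (_root_.gammaPDF a b x)
      = ∫⁻ x in Ioc 0 c, ENNReal.ofReal (f x) :=
    setLIntegral_congr_fun measurableSet_Ioc fun x hx => by
      simp only [_root_.gammaPDF, hx.1, if_true, f]
      congr 1
      ring
  rw [← Iic_union_Ioc_eq_Iic hc, lintegral_union measurableSet_Ioc (Iic_disjoint_Ioc le_rfl),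
    hnonpos, zero_add, hpos, ← ofReal_integral_eq_lintegral_ofReal
      ((intervalIntegrable_iff_integrableOn_Ioc_of_le hc).mp hf_int)
      ((ae_restrict_iff' measurableSet_Ioc).mpr (ae_of_all _ hf_nonneg)),
    ← intervalIntegral.integral_of_le hc, intervalIntegral.integral_const_mul,
    lowerIncompleteGamma_mul hb a hc]

variable (A B Ps l p : ℝ)

noncomputable def harvestedPower (g : ℝ) : ℝ :=
  Ps * (1 + exp (A * B)) / (exp (A * B) * (1 + exp (-(A * (l * p * g - B))))) -
    Ps * exp (-(A * B))

/-- The channel gain at which the harvested power equals `q`. -/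
noncomputable def harvestedPowerInv (q : ℝ) : ℝ :=
  (A * B - log (Ps * (1 + exp (A * B)) / (exp (A * B) * (q + Ps * exp (-(A * B)))) - 1)) /
    (A * l * p)

theorem harvestedPower_zero : harvestedPower A B Ps l p 0 = 0 := by
  have he : exp (A * B) ≠ 0 := (exp_pos _).ne'
  simp only [harvestedPower, mul_zero, zero_sub, mul_neg, neg_neg, exp_neg]
  field_simp
  ring

variable {A B Ps l p}

theorem harvestedPower_le_iff (hAlp : 0 < A * l * p) {q : ℝ}
    (hq : -(Ps * exp (-(A * B))) < q) (hqPs : q < Ps) (g : ℝ) :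
    harvestedPower A B Ps l p g ≤ q ↔ g ≤ harvestedPowerInv A B Ps l p q := by
  set e := exp (A * B)
  have he : 0 < e := exp_pos _
  have he_inv : e * exp (-(A * B)) = 1 := by rw [← exp_add, add_neg_cancel, exp_zero]
  set K := q + Ps * exp (-(A * B))
  have hK : 0 < K := by linarith
  set R := Ps * (1 + e) / (e * K)
  have hR : 1 < R := by
    have : e * K = e * q + Ps := by rw [mul_add, mul_left_comm, he_inv, mul_one]
    rw [one_lt_div (by positivity), this]
    nlinarith
  set E := exp (-(A * (l * p * g - B)))
  calc harvestedPower A B Ps l p g ≤ q ↔ R ≤ 1 + E := by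
        rw [harvestedPower, sub_le_iff_le_add, ← div_div, div_le_comm₀ (by positivity) hK,
          div_div]
    _ ↔ log (R - 1) ≤ -(A * (l * p * g - B)) := by
        rw [← sub_le_iff_le_add', log_le_iff_le_exp (by linarith)]
    _ ↔ g ≤ harvestedPowerInv A B Ps l p q := by
        rw [harvestedPowerInv, le_div_iff₀ hAlp]
        constructor <;> intro h <;> linarith

end

theorem harvestedPower_siso_cdf_general {Ω : Type*} [MeasureSpace Ω]
    (a b A B Ps l p : ℝ)
    (ha : 0 < a) (hb : 0 < b) (hA : 0 < A) (hPs : 0 < Ps)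
    (hl : 0 < l) (hp : 0 < p)
    (G : Ω → ℝ) (hG : Measurable G)
    (hlaw : Measure.map G ℙ = volume.withDensity fun x => ENNReal.ofReal (gammaPDF a b x))
    (q : ℝ) (hq0 : 0 < q) (hq1 : q < Ps) :
    ℙ {ω | Ps * (1 + Real.exp (A * B)) /
            (Real.exp (A * B) * (1 + Real.exp (-(A * (l * p * G ω - B))))) -
          Ps * Real.exp (-(A * B)) ≤ q} =
      ENNReal.ofReal ((1 / Real.Gamma a) *
        ∫ t in (0 : ℝ)..(-(b / (A * l * p)) *
            (Real.log (Ps * (1 + Real.exp (A * B)) /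
              (Real.exp (A * B) * (q + Ps * Real.exp (-(A * B)))) - 1) - A * B)),
          t ^ (a - 1) * Real.exp (-t)) := by
  have hAlp : 0 < A * l * p := by positivity
  have hq : -(Ps * Real.exp (-(A * B))) < q := (neg_neg_of_pos (by positivity)).trans hq0
  have hQ_le := harvestedPower_le_iff hAlp hq hq1
  have hc : 0 ≤ harvestedPowerInv A B Ps l p q :=
    (hQ_le 0).mp (by rw [harvestedPower_zero]; exact hq0.le)
  have hset : {ω | harvestedPower A B Ps l p (G ω) ≤ q}
      = G ⁻¹' Iic (harvestedPowerInv A B Ps l p q) :=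
    Set.ext fun ω => hQ_le (G ω)
  change ℙ {ω | harvestedPower A B Ps l p (G ω) ≤ q} = _
  rw [hset, ← Measure.map_apply hG measurableSet_Iic, hlaw,
    withDensity_apply _ measurableSet_Iic, setLIntegral_Iic_gammaPDF ha hb hc,
    harvestedPowerInv]
  congr 3
  ring

/-- **CDF of the harvested power in the nonlinear SISO energy-harvesting model.**
With channel gain `G ~ Gamma(a, b)` and harvested power
`Q = P_s(1+e^{AB})/(e^{AB}(1+e^{-A(lpG-B)})) - P_s e^{-AB}`, for every `0 < q < P_s`,
`P(Q ≤ q) = (1/Γ(a)) γ(a, -(b/(Alp))(ln(P_s(1+e^{AB})/(e^{AB}(q+P_s e^{-AB})) - 1) - AB))`. -/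
theorem harvestedPower_siso_cdf {Ω : Type*} [MeasureSpace Ω]
    [IsProbabilityMeasure (ℙ : Measure Ω)] (a b A B Ps l p : ℝ)
    (ha : 0 < a) (hb : 0 < b) (hA : 0 < A) (hB : 0 < B) (hPs : 0 < Ps)
    (hl : 0 < l) (hp : 0 < p)
    (G : Ω → ℝ) (hG : Measurable G)
    (hlaw : Measure.map G ℙ = volume.withDensity fun x => ENNReal.ofReal (gammaPDF a b x))
    (q : ℝ) (hq0 : 0 < q) (hq1 : q < Ps) :
    ℙ {ω | Ps * (1 + Real.exp (A * B)) /
            (Real.exp (A * B) * (1 + Real.exp (-(A * (l * p * G ω - B))))) -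
          Ps * Real.exp (-(A * B)) ≤ q} =
      ENNReal.ofReal ((1 / Real.Gamma a) *
        ∫ t in (0 : ℝ)..(-(b / (A * l * p)) *
            (Real.log (Ps * (1 + Real.exp (A * B)) /
              (Real.exp (A * B) * (q + Ps * Real.exp (-(A * B)))) - 1) - A * B)),
          t ^ (a - 1) * Real.exp (-t)) :=
  harvestedPower_siso_cdf_general a b A B Ps l p ha hb hA hPs hl hp G hG hlaw q hq0 hq1
end

section
/- Let a > 0, b > 0 and let A, B, P_s, l, p be positive constants; write b̂ = b/(A l p) and c = P_s e^{−AB}. Let G be a random variable with the Gamma(a, b) distribution and let Q = P_s(1 + e^{AB})/(e^{AB}(1 + e^{−A(l p G − B)})) − P_s e^{−AB}. Then the law of Q is absolutely continuous with density f_Q(q) = (c(1 + e^{AB}) b̂^{a} / (Γ(a) e^{A B b̂})) · (c e^{AB} − q)^{b̂ − 1} (c + q)^{−b̂ − 1} · (A B − ln(c(1 + e^{AB})/(c + q) − 1))^{a−1} for q ∈ (0, P_s), and density 0 elsewhere (note c e^{AB} = P_s). -/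
/-!
The harvested power is `Q = h (A l p G)` for the logistic curve
`h y = P_s (1 + e^m) / (e^m (1 + e^{m - y})) - c` with `m = A B`: an increasing bijection of
`(0, ∞)` onto `(0, P_s)` with explicit inverse `h⁻¹ q = m + log (c + q) - log (P_s - q)`.
Since `A l p G ~ Gamma(a, b̂)`, the one-dimensional change of variables formula gives
`f_Q q = f_{Gamma(a, b̂)} (h⁻¹ q) · (h⁻¹)' q` on `(0, P_s)`.
-/

open MeasureTheory ProbabilityTheory Set

open Real
open scoped ENNReal

theorem map_withDensity_eq_withDensity_of_invOn {s t : Set ℝ} {φ ψ ψ' : ℝ → ℝ}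
    {f : ℝ → ℝ≥0∞} (hs : MeasurableSet s) (ht : MeasurableSet t) (hφ : Measurable φ)
    (hf : ∀ x ∉ s, f x = 0) (hφst : MapsTo φ s t) (hψts : MapsTo ψ t s) (hinv : InvOn ψ φ s t)
    (hψ' : ∀ y ∈ t, HasDerivWithinAt ψ (ψ' y) t y) :
    Measure.map φ (volume.withDensity f) =
      volume.withDensity (t.indicator fun y => ENNReal.ofReal |ψ' y| * f (ψ y)) := by
  have hfs : s.indicator f = f :=
    indicator_eq_self.2 fun x hx => by_contra fun hxs => hx (hf x hxs)
  ext S hS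
  have hpre : s ∩ φ ⁻¹' S = ψ '' (S ∩ t) := by
    ext x
    constructor
    · rintro ⟨hxs, hxS⟩
      exact ⟨φ x, ⟨hxS, hφst hxs⟩, hinv.1 hxs⟩
    · rintro ⟨y, ⟨hyS, hyt⟩, rfl⟩
      exact ⟨hψts hyt, by simpa [hinv.2 hyt] using hyS⟩
  rw [Measure.map_apply hφ hS, withDensity_apply _ (hφ hS), withDensity_apply _ hS, ← hfs,
    setLIntegral_indicator hs, setLIntegral_indicator ht, hpre, inter_comm t,
    lintegral_image_eq_lintegral_abs_deriv_mul (hS.inter ht)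
      (fun y hy => (hψ' y hy.2).mono inter_subset_right) (hinv.2.injOn.mono inter_subset_right)]
  refine setLIntegral_congr_fun (hS.inter ht) fun y hy => ?_
  rw [indicator_of_mem (hψts hy.2)]

theorem gammaPDF_of_nonpos {a b x : ℝ} (hx : x ≤ 0) : _root_.gammaPDF a b x = 0 :=
  if_neg hx.not_gt

theorem gammaPDF_div_div {a b k : ℝ} (hb : 0 ≤ b) (hk : 0 < k) (y : ℝ) :
    _root_.gammaPDF a b (y / k) / k = _root_.gammaPDF a (b / k) y := by
  rcases le_or_gt y 0 with hy | hy
  · rw [gammaPDF_of_nonpos hy, gammaPDF_of_nonpos (div_nonpos_of_nonpos_of_nonneg hy hk.le),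
      zero_div]
  rw [_root_.gammaPDF, if_pos (div_pos hy hk), _root_.gammaPDF, if_pos hy, div_rpow hy.le hk.le,
    div_rpow hb hk.le, rpow_sub_one hk.ne']
  field_simp

theorem map_const_mul_withDensity_gammaPDF {a b k : ℝ} (hb : 0 ≤ b) (hk : 0 < k) :
    Measure.map (k * ·) (volume.withDensity fun x => ENNReal.ofReal (gammaPDF a b x)) =
      volume.withDensity fun y => ENNReal.ofReal (gammaPDF a (b / k) y) := by
  rw [map_withDensity_eq_withDensity_of_invOn (ψ := (· / k)) (ψ' := fun _ => 1 / k)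
    measurableSet_Ioi measurableSet_Ioi (measurable_const_mul k)
    (fun x hx => by rw [gammaPDF_of_nonpos (not_lt.1 hx), ENNReal.ofReal_zero])
    (fun x hx => mul_pos hk hx) (fun y hy => div_pos hy hk)
    ⟨fun x _ => by field_simp, fun y _ => by field_simp⟩
    (fun y _ => ((hasDerivAt_id y).div_const k).hasDerivWithinAt)]
  congr 1
  ext y
  rcases le_or_gt y 0 with hy | hy
  · rw [indicator_of_notMem (notMem_Ioi.2 hy), gammaPDF_of_nonpos hy, ENNReal.ofReal_zero]
  rw [indicator_of_mem (mem_Ioi.2 hy), ← ENNReal.ofReal_mul (abs_nonneg _),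
    abs_of_pos (one_div_pos.2 hk), one_div_mul_eq_div, gammaPDF_div_div hb hk]

noncomputable def harvestCurve (Ps m y : ℝ) : ℝ :=
  Ps * (1 + exp m) / (exp m * (1 + exp (-(y - m)))) - Ps * exp (-m)

noncomputable def harvestCurveInv (Ps m q : ℝ) : ℝ :=
  m + log (Ps * exp (-m) + q) - log (Ps - q)

theorem mul_exp_neg_mul_exp (x m : ℝ) : x * exp (-m) * exp m = x := by
  rw [exp_neg, inv_mul_cancel_right₀ (exp_pos m).ne']

section HarvestCurve

variable {Ps m : ℝ}

theorem continuous_harvestCurve (Ps m : ℝ) : Continuous (harvestCurve Ps m) :=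
  (continuous_const.div (by fun_prop) fun y => by positivity).sub continuous_const

theorem add_harvestCurve (Ps m y : ℝ) :
    Ps * exp (-m) + harvestCurve Ps m y = Ps * (1 + exp m) / (exp m * (1 + exp (m - y))) := by
  rw [harvestCurve, neg_sub]
  ring

theorem sub_harvestCurve (Ps m y : ℝ) :
    Ps - harvestCurve Ps m y =
      Ps * (1 + exp m) * exp (m - y) / (exp m * (1 + exp (m - y))) := by
  rw [harvestCurve, neg_sub, exp_neg]
  field_simp
  ring

theorem harvestCurve_mem_Ioo (hPs : 0 < Ps) {y : ℝ} (hy : 0 < y) :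
    harvestCurve Ps m y ∈ Ioo 0 Ps := by
  have hlt : exp (m - y) < exp m := exp_lt_exp.2 (by linarith)
  refine ⟨lt_of_add_lt_add_left (a := Ps * exp (-m)) ?_,
    sub_pos.1 (by rw [sub_harvestCurve]; positivity)⟩
  rw [add_zero, add_harvestCurve, exp_neg, ← div_eq_mul_inv,
    div_lt_div_iff₀ (exp_pos m) (by positivity)]
  nlinarith [mul_lt_mul_of_pos_left hlt (mul_pos hPs (exp_pos m))]

theorem harvestCurveInv_harvestCurve (hPs : 0 < Ps) (y : ℝ) :
    harvestCurveInv Ps m (harvestCurve Ps m y) = y := by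
  rw [harvestCurveInv, add_sub_assoc, ← log_div (by rw [add_harvestCurve]; positivity)
    (by rw [sub_harvestCurve]; positivity), add_harvestCurve, sub_harvestCurve,
    div_div_div_cancel_right₀ (by positivity), div_mul_cancel_left₀ (by positivity),
    ← exp_neg, log_exp]
  ring

theorem harvestCurve_harvestCurveInv {q : ℝ} (hq : q ∈ Ioo (-(Ps * exp (-m))) Ps) :
    harvestCurve Ps m (harvestCurveInv Ps m q) = q := by
  obtain ⟨hq₁, hq₂⟩ := hq
  have hPs : 0 < Ps := by nlinarith [exp_pos (-m)]
  have hexp : exp (-(harvestCurveInv Ps m q - m)) = (Ps - q) / (Ps * exp (-m) + q) := by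
    rw [harvestCurveInv, show -(m + log (Ps * exp (-m) + q) - log (Ps - q) - m) =
      log (Ps - q) - log (Ps * exp (-m) + q) by ring, exp_sub, exp_log (by linarith),
      exp_log (by linarith)]
  have hc := mul_pos hPs (exp_pos (-m))
  have hcE := mul_exp_neg_mul_exp Ps m
  rw [harvestCurve, hexp]
  generalize Ps * exp (-m) = c at *
  have hcq : c + q ≠ 0 := by linarith
  have h1 : 1 + (Ps - q) / (c + q) = c * (1 + exp m) / (c + q) := by
    field_simp
    linear_combination -hcE
  rw [h1, ← hcE]
  field_simp
  ring

theorem harvestCurveInv_pos {q : ℝ} (hq : q ∈ Ioo 0 Ps) : 0 < harvestCurveInv Ps m q := by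
  obtain ⟨hq0, hqP⟩ := hq
  have hPs : 0 < Ps := hq0.trans hqP
  rw [harvestCurveInv, add_sub_assoc, ← log_div (by positivity) (by linarith)]
  have hratio : exp (-m) < (Ps * exp (-m) + q) / (Ps - q) := by
    rw [lt_div_iff₀ (by linarith)]
    nlinarith [exp_pos (-m)]
  have hlog := log_lt_log (exp_pos _) hratio
  rw [log_exp] at hlog
  linarith

theorem hasDerivAt_harvestCurveInv {q : ℝ} (hq : q ∈ Ioo (-(Ps * exp (-m))) Ps) :
    HasDerivAt (harvestCurveInv Ps m) (1 / (Ps * exp (-m) + q) + 1 / (Ps - q)) q := by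
  obtain ⟨hcq, hPq⟩ := hq
  have hc := ((hasDerivAt_id' q).const_add (Ps * exp (-m))).log
    (by linarith : 0 < Ps * exp (-m) + q).ne'
  have hP := ((hasDerivAt_id' q).const_sub Ps).log (by linarith : 0 < Ps - q).ne'
  exact ((hc.const_add m).sub hP).congr_deriv (by ring)

theorem harvestCurveInv_eq_sub_log {q : ℝ} (hq : q ∈ Ioo (-(Ps * exp (-m))) Ps) :
    harvestCurveInv Ps m q =
      m - log (Ps * exp (-m) * (1 + exp m) / (Ps * exp (-m) + q) - 1) := by
  obtain ⟨hq₁, hq₂⟩ := hq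
  have hcq : 0 < Ps * exp (-m) + q := by linarith
  have hPq : 0 < Ps - q := by linarith
  have hratio : Ps * exp (-m) * (1 + exp m) / (Ps * exp (-m) + q) - 1 =
      (Ps - q) / (Ps * exp (-m) + q) := by
    have hcE := mul_exp_neg_mul_exp Ps m
    generalize Ps * exp (-m) = c at *
    field_simp
    linear_combination hcE
  rw [hratio, log_div hPq.ne' hcq.ne', harvestCurveInv]
  ring

theorem map_harvestCurve_withDensity_gammaPDF (hPs : 0 < Ps) (a β : ℝ) :
    Measure.map (harvestCurve Ps m)
        (volume.withDensity fun x => ENNReal.ofReal (_root_.gammaPDF a β x)) =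
      volume.withDensity ((Ioo 0 Ps).indicator fun q => ENNReal.ofReal
        ((1 / (Ps * exp (-m) + q) + 1 / (Ps - q)) *
          _root_.gammaPDF a β (harvestCurveInv Ps m q))) := by
  have hIoo : Ioo 0 Ps ⊆ Ioo (-(Ps * exp (-m))) Ps :=
    Ioo_subset_Ioo_left (neg_nonpos.2 (by positivity))
  rw [map_withDensity_eq_withDensity_of_invOn measurableSet_Ioi measurableSet_Ioo
    (continuous_harvestCurve Ps m).measurable
    (fun x hx => by rw [gammaPDF_of_nonpos (not_lt.1 hx), ENNReal.ofReal_zero])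
    (fun y hy => harvestCurve_mem_Ioo hPs hy) (fun q hq => harvestCurveInv_pos hq)
    ⟨fun y _ => harvestCurveInv_harvestCurve hPs y,
      fun q hq => harvestCurve_harvestCurveInv (hIoo hq)⟩
    (fun q hq => (hasDerivAt_harvestCurveInv (hIoo hq)).hasDerivWithinAt)]
  refine congrArg _ (indicator_congr fun q hq => ?_)
  obtain ⟨hcq, hPq⟩ := hIoo hq
  have hderiv : 0 < 1 / (Ps * exp (-m) + q) + 1 / (Ps - q) :=
    add_pos (one_div_pos.2 (by linarith)) (one_div_pos.2 (by linarith))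
  rw [abs_of_pos hderiv, ENNReal.ofReal_mul hderiv.le]

theorem deriv_mul_gammaPDF_harvestCurveInv {q : ℝ} (hq : q ∈ Ioo 0 Ps) (a β : ℝ) :
    (1 / (Ps * exp (-m) + q) + 1 / (Ps - q)) * _root_.gammaPDF a β (harvestCurveInv Ps m q) =
      Ps * exp (-m) * (1 + exp m) * β ^ a / (Gamma a * exp (m * β)) * (Ps - q) ^ (β - 1) *
        (Ps * exp (-m) + q) ^ (-β - 1) * harvestCurveInv Ps m q ^ (a - 1) := by
  have hcq : 0 < Ps * exp (-m) + q := add_pos (mul_pos (hq.1.trans hq.2) (exp_pos _)) hq.1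
  have hPq : 0 < Ps - q := sub_pos.2 hq.2
  have hderiv : 1 / (Ps * exp (-m) + q) + 1 / (Ps - q) =
      Ps * exp (-m) * (1 + exp m) / ((Ps * exp (-m) + q) * (Ps - q)) := by
    have hcE := mul_exp_neg_mul_exp Ps m
    generalize Ps * exp (-m) = c at *
    field_simp
    linear_combination -hcE
  have hexp : exp (-(β * harvestCurveInv Ps m q)) =
      (Ps - q) ^ β * (Ps * exp (-m) + q) ^ (-β) / exp (m * β) := by
    rw [rpow_def_of_pos hPq, rpow_def_of_pos hcq, ← exp_add, ← exp_sub, harvestCurveInv]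
    ring_nf
  rw [_root_.gammaPDF, if_pos (harvestCurveInv_pos hq), hexp, hderiv, rpow_sub_one hPq.ne',
    rpow_sub_one hcq.ne']
  field_simp

end HarvestCurve

theorem harvestedPower_siso_pdf_general {Ω : Type*} [MeasureSpace Ω]
    (a b A B Ps l p bhat c : ℝ)
    (hb : 0 < b) (hA : 0 < A) (hPs : 0 < Ps)
    (hl : 0 < l) (hp : 0 < p)
    (hbhat : bhat = b / (A * l * p)) (hc : c = Ps * Real.exp (-(A * B)))
    (G : Ω → ℝ) (hG : Measurable G)
    (hlaw : Measure.map G ℙ = volume.withDensity fun x => ENNReal.ofReal (gammaPDF a b x)) :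
    Measure.map (fun ω =>
        Ps * (1 + Real.exp (A * B)) /
            (Real.exp (A * B) * (1 + Real.exp (-(A * (l * p * G ω - B))))) -
          Ps * Real.exp (-(A * B))) ℙ =
      volume.withDensity fun q =>
        ENNReal.ofReal
          (if 0 < q ∧ q < Ps then
            c * (1 + Real.exp (A * B)) * bhat ^ a /
                (Real.Gamma a * Real.exp (A * B * bhat)) *
              (c * Real.exp (A * B) - q) ^ (bhat - 1) * (c + q) ^ (-bhat - 1) *
              (A * B - Real.log (c * (1 + Real.exp (A * B)) / (c + q) - 1)) ^ (a - 1)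
          else 0) := by
  have hk : 0 < A * l * p := by positivity
  have hQ : (fun ω => Ps * (1 + exp (A * B)) /
      (exp (A * B) * (1 + exp (-(A * (l * p * G ω - B))))) - Ps * exp (-(A * B))) =
      harvestCurve Ps (A * B) ∘ (A * l * p * ·) ∘ G := by
    funext ω
    simp only [Function.comp, harvestCurve, mul_sub, mul_assoc]
  rw [hQ, ← Measure.map_map (continuous_harvestCurve _ _).measurable
      ((measurable_const_mul _).comp hG), ← Measure.map_map (measurable_const_mul _) hG, hlaw,
    map_const_mul_withDensity_gammaPDF hb.le hk, ← hbhat,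
    map_harvestCurve_withDensity_gammaPDF hPs]
  congr 1
  funext q
  by_cases hq : 0 < q ∧ q < Ps
  · have hIoo : Ioo 0 Ps ⊆ Ioo (-(Ps * exp (-(A * B)))) Ps :=
      Ioo_subset_Ioo_left (neg_nonpos.2 (by positivity))
    rw [indicator_of_mem (show q ∈ Ioo 0 Ps from hq), if_pos hq,
      deriv_mul_gammaPDF_harvestCurveInv hq, harvestCurveInv_eq_sub_log (hIoo hq), hc,
      mul_exp_neg_mul_exp]
  · rw [indicator_of_notMem (show q ∉ Ioo 0 Ps from hq), if_neg hq, ENNReal.ofReal_zero]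

/-- **PDF of the harvested power in the nonlinear SISO energy-harvesting model.**
With `b̂ = b/(Alp)`, `c = P_s e^{-AB}`, channel gain `G ~ Gamma(a, b)` and
`Q = P_s(1+e^{AB})/(e^{AB}(1+e^{-A(lpG-B)})) - P_s e^{-AB}`, the law of `Q` has density
`(c(1+e^{AB}) b̂^a/(Γ(a) e^{ABb̂})) (ce^{AB}-q)^{b̂-1} (c+q)^{-b̂-1}
   (AB - ln(c(1+e^{AB})/(c+q) - 1))^{a-1}` on `(0, P_s)`, and `0` elsewhere. -/
theorem harvestedPower_siso_pdf {Ω : Type*} [MeasureSpace Ω]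
    [IsProbabilityMeasure (ℙ : Measure Ω)] (a b A B Ps l p bhat c : ℝ)
    (ha : 0 < a) (hb : 0 < b) (hA : 0 < A) (hB : 0 < B) (hPs : 0 < Ps)
    (hl : 0 < l) (hp : 0 < p)
    (hbhat : bhat = b / (A * l * p)) (hc : c = Ps * Real.exp (-(A * B)))
    (G : Ω → ℝ) (hG : Measurable G)
    (hlaw : Measure.map G ℙ = volume.withDensity fun x => ENNReal.ofReal (gammaPDF a b x)) :
    Measure.map (fun ω =>
        Ps * (1 + Real.exp (A * B)) /
            (Real.exp (A * B) * (1 + Real.exp (-(A * (l * p * G ω - B))))) -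
          Ps * Real.exp (-(A * B))) ℙ =
      volume.withDensity fun q =>
        ENNReal.ofReal
          (if 0 < q ∧ q < Ps then
            c * (1 + Real.exp (A * B)) * bhat ^ a /
                (Real.Gamma a * Real.exp (A * B * bhat)) *
              (c * Real.exp (A * B) - q) ^ (bhat - 1) * (c + q) ^ (-bhat - 1) *
              (A * B - Real.log (c * (1 + Real.exp (A * B)) / (c + q) - 1)) ^ (a - 1)
          else 0) :=
  harvestedPower_siso_pdf_general a b A B Ps l p bhat c hb hA hPs hl hp hbhat hc G hG hlaw
end
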